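/- arXiv:math/0110278 — 3 statements merged into one kernel-verified Lean document; each statement's English description precedes it below -/
import Mathlib

section
/- Let N be a free ℤ-module of finite rank r and let σ ⊆ N ⊗ ℝ be a rational convex polyhedral cone (the positive hull of finitely many elements of N ⊗ ℚ). Then the monoid σ ∩ N is finitely generated as an additive semigroup. -/
/-- The positive hull of a finite family of vectors in `ℝ^r`. -/
def posHull {r k : ℕ} (n : Fin k → (Fin r → ℝ)) : Set (Fin r → ℝ) :=
  {x | ∃ lam : Fin k → ℝ, (∀ i, 0 ≤ lam i) ∧ x = ∑ i, lam i • n i}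

/-- **Gordan's lemma.** For a rational convex polyhedral cone `σ` (the positive hull of
finitely many rational vectors) in `ℝ^r`, the monoid of lattice points `σ ∩ ℤ^r` is
finitely generated as an additive semigroup. -/
theorem gordan_lemma (r k : ℕ) (n : Fin k → (Fin r → ℚ))
    (σ : Set (Fin r → ℝ))
    (hσ : σ = posHull (fun i j => ((n i j : ℝ)))) :
    ∃ S : Finset (Fin r → ℤ),
      (∀ s ∈ S, (fun i => ((s i : ℝ))) ∈ σ) ∧
      ∀ v : Fin r → ℤ, (fun i => ((v i : ℝ))) ∈ σ →
        v ∈ AddSubmonoid.closure (S : Set (Fin r → ℤ)) := by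
  classical
  subst hσ
  -- common denominator
  set d : ℕ := ∏ p : Fin k × Fin r, (n p.1 p.2).den with hd_def
  have hdpos : 0 < d := Finset.prod_pos (fun p _ => (n p.1 p.2).pos)
  have hden : ∀ i j, (n i j).den ∣ d := fun i j =>
    Finset.dvd_prod_of_mem _ (Finset.mem_univ (i, j))
  -- integer generators
  set m : Fin k → Fin r → ℤ := fun i j => (n i j).num * ((d / (n i j).den : ℕ) : ℤ)
    with hm_def
  have key : ∀ i j, ((m i j : ℝ)) = (d : ℝ) * ((n i j : ℝ)) := by
    intro i j
    have h1 : ((d / (n i j).den : ℕ) : ℚ) * ((n i j).den : ℚ) = (d : ℚ) := by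
      exact_mod_cast Nat.div_mul_cancel (hden i j)
    have hden0 : ((n i j).den : ℚ) ≠ 0 := by
      exact_mod_cast (n i j).den_nz
    have h2 : ((m i j : ℚ)) = (d : ℚ) * n i j := by
      apply mul_right_cancel₀ hden0
      have hnd : n i j * ((n i j).den : ℚ) = ((n i j).num : ℚ) := Rat.mul_den_eq_num _
      have hm' : ((m i j : ℚ)) = ((n i j).num : ℚ) * (((d / (n i j).den : ℕ)) : ℚ) := by
        simp only [hm_def, Int.cast_mul, Int.cast_natCast]
      rw [hm', mul_assoc ((d : ℚ)), hnd, mul_assoc, h1]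
      ring
    calc ((m i j : ℝ)) = (((m i j : ℚ)) : ℝ) := by push_cast; ring
      _ = (d : ℝ) * ((n i j : ℝ)) := by rw [h2]; push_cast; ring
  -- the fundamental box lattice points
  set T : Set (Fin r → ℤ) := {v | ∃ t : Fin k → ℝ, (∀ i, 0 ≤ t i ∧ t i ≤ 1) ∧
    ∀ j, ((v j : ℝ)) = ∑ i, t i * ((m i j : ℝ))} with hT_def
  have hTfin : T.Finite := by
    have : T ⊆ Set.pi Set.univ (fun j => Set.Icc (-(∑ i, |m i j|)) (∑ i, |m i j|)) := by
      rintro v ⟨t, ht, hv⟩ j _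
      have hb : |((v j : ℝ))| ≤ ((∑ i, |m i j| : ℤ) : ℝ) := by
        rw [hv j]
        calc |∑ i, t i * ((m i j : ℝ))| ≤ ∑ i, |t i * ((m i j : ℝ))| :=
              Finset.abs_sum_le_sum_abs _ _
          _ ≤ ∑ i, |((m i j : ℝ))| := by
              apply Finset.sum_le_sum
              intro i _
              rw [abs_mul]
              have := (ht i).1
              have := (ht i).2
              nlinarith [abs_nonneg ((m i j : ℝ)), abs_le.mpr ⟨by linarith, (ht i).2⟩]
          _ = ((∑ i, |m i j| : ℤ) : ℝ) := by push_cast; ring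
      have : |v j| ≤ ∑ i, |m i j| := by exact_mod_cast hb
      exact Set.mem_Icc.mpr (abs_le.mp this)
    exact Set.Finite.subset (Set.Finite.pi (fun j => Set.finite_Icc _ _)) this
  refine ⟨hTfin.toFinset, ?_, ?_⟩
  · -- elements of S are in σ
    rintro s hs
    rw [Set.Finite.mem_toFinset] at hs
    obtain ⟨t, ht, hv⟩ := hs
    refine ⟨fun i => t i * d, fun i => mul_nonneg (ht i).1 (by positivity), ?_⟩
    funext j
    rw [hv j]
    rw [Finset.sum_apply]
    apply Finset.sum_congr rfl
    intro i _
    simp only [Pi.smul_apply, smul_eq_mul]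
    rw [key i j]; ring
  · -- generation
    intro v hv
    obtain ⟨lam, hlam, hveq⟩ := hv
    have hmu : ∀ j, ((v j : ℝ)) = ∑ i, (lam i / d) * ((m i j : ℝ)) := by
      intro j
      have := congrFun hveq j
      rw [Finset.sum_apply] at this
      rw [this]
      apply Finset.sum_congr rfl
      intro i _
      simp only [Pi.smul_apply, smul_eq_mul]
      rw [key i j]
      have hd0 : (d : ℝ) ≠ 0 := by positivity
      field_simp
    have main : ∀ N : ℕ, ∀ w : Fin r → ℤ, ∀ μ : Fin k → ℝ,
        (∀ i, 0 ≤ μ i) → (∑ i, (⌊μ i⌋).toNat) = N →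
        (∀ j, ((w j : ℝ)) = ∑ i, μ i * ((m i j : ℝ))) →
        w ∈ AddSubmonoid.closure ((hTfin.toFinset : Finset (Fin r → ℤ)) : Set (Fin r → ℤ)) := by
      intro N
      induction N using Nat.strong_induction_on with
      | _ N ih =>
        intro w μ hμ hN hw
        by_cases h0 : ∀ i, μ i < 1
        · apply AddSubmonoid.subset_closure
          rw [Finset.mem_coe, Set.Finite.mem_toFinset]
          exact ⟨μ, fun i => ⟨hμ i, (h0 i).le⟩, hw⟩
        · push_neg at h0
          obtain ⟨j0, hj0⟩ := h0
          have hfl : 1 ≤ ⌊μ j0⌋ := by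
            rw [Int.le_floor]; exact_mod_cast hj0
          set μ' : Fin k → ℝ := Function.update μ j0 (μ j0 - 1) with hμ'_def
          set w' : Fin r → ℤ := fun j => w j - m j0 j with hw'_def
          have hμ'nn : ∀ i, 0 ≤ μ' i := by
            intro i
            rcases eq_or_ne i j0 with rfl | h
            · simp [hμ'_def]; linarith
            · simp [hμ'_def, Function.update_of_ne h]; exact hμ i
          have hsum : ∀ j, ((w' j : ℝ)) = ∑ i, μ' i * ((m i j : ℝ)) := by
            intro j
            have hsplit : ∑ i, μ' i * ((m i j : ℝ)) =
                (∑ i, μ i * ((m i j : ℝ))) - ((m j0 j : ℝ)) := by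
              rw [← Finset.add_sum_erase _ _ (Finset.mem_univ j0),
                  ← Finset.add_sum_erase _ (fun i => μ i * ((m i j : ℝ))) (Finset.mem_univ j0)]
              have he : ∀ i ∈ Finset.univ.erase j0,
                  μ' i * ((m i j : ℝ)) = μ i * ((m i j : ℝ)) := by
                intro i hi
                rw [hμ'_def, Function.update_of_ne (Finset.ne_of_mem_erase hi)]
              rw [Finset.sum_congr rfl he]
              simp [hμ'_def]
              ring
            rw [hsplit, ← hw j]
            push_cast [hw'_def]
            ring
          have hNlt : (∑ i, (⌊μ' i⌋).toNat) < N := by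
            rw [← hN]
            rw [← Finset.add_sum_erase _ _ (Finset.mem_univ j0),
                ← Finset.add_sum_erase _ (fun i => (⌊μ i⌋).toNat) (Finset.mem_univ j0)]
            have he : ∀ i ∈ Finset.univ.erase j0,
                (⌊μ' i⌋).toNat = (⌊μ i⌋).toNat := by
              intro i hi
              rw [hμ'_def, Function.update_of_ne (Finset.ne_of_mem_erase hi)]
            rw [Finset.sum_congr rfl he]
            have hfl1 : ⌊μ' j0⌋ = ⌊μ j0⌋ - 1 := by
              have : μ' j0 = μ j0 - 1 := by simp [hμ'_def]
              rw [this, Int.floor_sub_one]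
            rw [hfl1]
            omega
          have hw'mem := ih _ hNlt w' μ' hμ'nn rfl hsum
          have hmmem : m j0 ∈ AddSubmonoid.closure
              ((hTfin.toFinset : Finset (Fin r → ℤ)) : Set (Fin r → ℤ)) := by
            apply AddSubmonoid.subset_closure
            rw [Finset.mem_coe, Set.Finite.mem_toFinset]
            refine ⟨fun i => if i = j0 then 1 else 0, ?_, ?_⟩
            · intro i; by_cases h : i = j0 <;> simp [h]
            · intro j
              simp only [ite_mul, one_mul, zero_mul, Finset.sum_ite_eq',
                Finset.mem_univ, if_true]
          have : w = w' + m j0 := by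
            funext j
            simp [hw'_def]
          rw [this]
          exact AddSubmonoid.add_mem _ hw'mem hmmem
    exact main _ v (fun i => lam i / d)
      (fun i => div_nonneg (hlam i) (by positivity)) rfl hmu
end

section
/- Let σ ⊆ N_ℝ be a strongly convex rational polyhedral cone with respect to a lattice N. Define H := { n ∈ σ ∩ (N \ {0}) : n cannot be written as the sum of two elements of σ ∩ (N \ {0}) }. Then H generates the monoid σ ∩ N, and every generating set of the monoid σ ∩ N contains H; in particular H is the unique minimal generating system (the Hilbert basis) of σ ∩ N. -/
lemma posHull_zero {r k : ℕ} (n : Fin k → (Fin r → ℝ)) : (0 : Fin r → ℝ) ∈ posHull n :=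
  ⟨0, fun _ => le_refl 0, by simp⟩

lemma posHull_add {r k : ℕ} {n : Fin k → (Fin r → ℝ)} {x y : Fin r → ℝ}
    (hx : x ∈ posHull n) (hy : y ∈ posHull n) : x + y ∈ posHull n := by
  obtain ⟨a, ha, rfl⟩ := hx
  obtain ⟨b, hb, rfl⟩ := hy
  exact ⟨a + b, fun i => add_nonneg (ha i) (hb i), by
    rw [← Finset.sum_add_distrib]
    exact Finset.sum_congr rfl fun i _ => (add_smul _ _ _).symm⟩

lemma posHull_smul {r k : ℕ} {n : Fin k → (Fin r → ℝ)} {c : ℝ} (hc : 0 ≤ c)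
    {x : Fin r → ℝ} (hx : x ∈ posHull n) : c • x ∈ posHull n := by
  obtain ⟨a, ha, rfl⟩ := hx
  exact ⟨fun i => c * a i, fun i => mul_nonneg hc (ha i), by
    rw [Finset.smul_sum]
    exact Finset.sum_congr rfl fun i _ => (mul_smul _ _ _).symm⟩

lemma posHull_gen {r k : ℕ} (n : Fin k → (Fin r → ℝ)) (i : Fin k) : n i ∈ posHull n :=
  ⟨fun j => if i = j then 1 else 0, fun j => by positivity, by simp [ite_smul]⟩

lemma exists_int_functional {r k : ℕ} (N : Fin k → (Fin r → ℝ)) (σ : Set (Fin r → ℝ))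
    (hσ : σ = posHull N) (hpointed : σ ∩ (-σ) = {0}) :
    ∃ p : Fin r → ℤ, ∀ x ∈ σ, x ≠ 0 → 0 < ∑ j, (p j : ℝ) * x j := by
  subst hσ
  -- σ as an AddSubmonoid, to sum over
  set σ : Set (Fin r → ℝ) := posHull N with hσdef
  let Sm : AddSubmonoid (Fin r → ℝ) :=
    { carrier := σ
      zero_mem' := posHull_zero N
      add_mem' := fun hx hy => posHull_add hx hy }
  -- key: a nonneg combination of elements of σ which is 0 has all terms 0
  have key0 : ∀ {ι : Type} (t : Finset ι) (w : ι → ℝ) (z : ι → Fin r → ℝ),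
      (∀ i ∈ t, 0 ≤ w i) → (∀ i ∈ t, z i ∈ σ) → ∑ i ∈ t, w i • z i = 0 →
      ∀ i ∈ t, w i • z i = 0 := by
    intro ι t w z hw hz hsum i hi
    classical
    have h1 : w i • z i ∈ σ := posHull_smul (hw i hi) (hz i hi)
    have h2 : -(w i • z i) = ∑ j ∈ t.erase i, w j • z j := by
      have h := Finset.add_sum_erase t (fun j => w j • z j) hi
      rw [hsum] at h
      exact neg_eq_of_add_eq_zero_right h
    have h3 : -(w i • z i) ∈ σ := by
      rw [h2]
      exact AddSubmonoid.sum_mem Sm fun j hj =>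
        posHull_smul (hw j (Finset.mem_of_mem_erase hj)) (hz j (Finset.mem_of_mem_erase hj))
    have : w i • z i ∈ σ ∩ (-σ) := ⟨h1, by simpa [Set.mem_neg] using h3⟩
    rw [hpointed] at this
    simpa using this
  -- the convex hull of the nonzero generators
  set C : Set (Fin r → ℝ) := convexHull ℝ (N '' {i | N i ≠ 0}) with hCdef
  have h0C : (0 : Fin r → ℝ) ∉ C := by
    intro h0
    rw [hCdef, convexHull_eq] at h0
    obtain ⟨ι, t, w, z, hw0, hw1, hz, hcm⟩ := h0
    rw [Finset.centerMass_eq_of_sum_1 _ _ hw1] at hcm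
    have hzσ : ∀ i ∈ t, z i ∈ σ := by
      intro i hi
      obtain ⟨i₀, _, hi₀⟩ := hz i hi
      rw [← hi₀]; exact posHull_gen N i₀
    have hall := key0 t w z hw0 hzσ hcm
    have : ∃ i ∈ t, w i ≠ 0 := by
      by_contra hc
      push_neg at hc
      rw [Finset.sum_eq_zero hc] at hw1
      norm_num at hw1
    obtain ⟨i, hi, hwi⟩ := this
    obtain ⟨i₀, hi₀ne, hi₀⟩ := hz i hi
    have := hall i hi
    rw [smul_eq_zero] at this
    rcases this with h | h
    · exact hwi h
    · rw [← hi₀] at h; exact hi₀ne h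
  have hCclosed : IsClosed C := (((Set.toFinite _).image N).isClosed_convexHull (𝕜 := ℝ))
  obtain ⟨f, u, hfu, hC⟩ :=
    geometric_hahn_banach_point_closed (convex_convexHull ℝ _) hCclosed h0C
  have hu : 0 < u := by simpa using hfu
  have hfN : ∀ i, N i ≠ 0 → u < f (N i) := fun i hi =>
    hC _ (subset_convexHull ℝ _ ⟨i, hi, rfl⟩)
  -- the coordinates of f
  set w : Fin r → ℝ := fun j => f (fun l => if j = l then 1 else 0) with hwdef
  have hf_eq : ∀ x : Fin r → ℝ, f x = ∑ j, x j * w j := by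
    intro x
    have := LinearMap.pi_apply_eq_sum_univ (f : (Fin r → ℝ) →ₗ[ℝ] ℝ) x
    simpa [smul_eq_mul] using this
  -- bound on the generators
  set B : ℝ := 1 + ∑ i, ∑ j, |N i j| with hBdef
  have hB1 : 1 ≤ B := by
    rw [hBdef]
    have : (0:ℝ) ≤ ∑ i, ∑ j, |N i j| :=
      Finset.sum_nonneg fun i _ => Finset.sum_nonneg fun j _ => abs_nonneg _
    linarith
  have hBi : ∀ i, ∑ j, |N i j| ≤ B - 1 := by
    intro i
    rw [hBdef]
    have := Finset.single_le_sum (f := fun i => ∑ j, |N i j|)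
      (fun i _ => Finset.sum_nonneg fun j _ => abs_nonneg _) (Finset.mem_univ i)
    linarith
  obtain ⟨D, hD⟩ := exists_nat_gt (B / u)
  have hDu : B < D * u := (div_lt_iff₀ hu).mp hD
  have hDpos : (0:ℝ) < D := by
    rcases Nat.eq_zero_or_pos D with h | h
    · exfalso; rw [h] at hDu; push_cast at hDu; nlinarith
    · exact_mod_cast h
  refine ⟨fun j => ⌈(D:ℝ) * w j⌉, ?_⟩
  set p : Fin r → ℤ := fun j => ⌈(D:ℝ) * w j⌉ with hpdef
  have hp1 : ∀ j, (D:ℝ) * w j ≤ (p j : ℝ) := fun j => Int.le_ceil _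
  have hp2 : ∀ j, (p j : ℝ) < (D:ℝ) * w j + 1 := fun j => by
    simpa using (Int.ceil_lt_add_one ((D:ℝ) * w j))
  -- positivity on nonzero generators
  have hgenpos : ∀ i, N i ≠ 0 → 0 < ∑ j, (p j : ℝ) * N i j := by
    intro i hi
    have hfi : u < ∑ j, N i j * w j := by rw [← hf_eq]; exact hfN i hi
    have hsplit : ∑ j, (p j : ℝ) * N i j
        = (D:ℝ) * (∑ j, N i j * w j) + ∑ j, ((p j : ℝ) - (D:ℝ) * w j) * N i j := by
      rw [Finset.mul_sum, ← Finset.sum_add_distrib]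
      exact Finset.sum_congr rfl fun j _ => by ring
    have herr : ∀ j, -|N i j| ≤ ((p j : ℝ) - (D:ℝ) * w j) * N i j := by
      intro j
      have h0 : 0 ≤ (p j : ℝ) - (D:ℝ) * w j := by linarith [hp1 j]
      have h1 : (p j : ℝ) - (D:ℝ) * w j ≤ 1 := by linarith [hp2 j]
      rcases le_or_gt 0 (N i j) with h | h
      · have : 0 ≤ ((p j : ℝ) - (D:ℝ) * w j) * N i j := mul_nonneg h0 h
        have := abs_nonneg (N i j)
        linarith
      · rw [abs_of_neg h]
        nlinarith
    have herr' : -(B - 1) ≤ ∑ j, ((p j : ℝ) - (D:ℝ) * w j) * N i j := by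
      calc -(B-1) ≤ -∑ j, |N i j| := by linarith [hBi i]
      _ = ∑ j, -|N i j| := by rw [Finset.sum_neg_distrib]
      _ ≤ _ := Finset.sum_le_sum fun j _ => herr j
    have : (D:ℝ) * u ≤ (D:ℝ) * (∑ j, N i j * w j) :=
      mul_le_mul_of_nonneg_left (le_of_lt hfi) (le_of_lt hDpos)
    rw [hsplit]
    nlinarith
  -- now conclude for arbitrary nonzero elements of σ
  intro x hx hxne
  obtain ⟨lam, hlam, rfl⟩ := hx
  have hswap : ∑ j, (p j : ℝ) * (∑ i, lam i • N i) j
      = ∑ i, lam i * (∑ j, (p j : ℝ) * N i j) := by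
    have : ∀ j : Fin r, (∑ i, lam i • N i) j = ∑ i, lam i * N i j := by
      intro j; rw [Finset.sum_apply]; rfl
    simp_rw [this, Finset.mul_sum]
    rw [Finset.sum_comm]
    exact Finset.sum_congr rfl fun i _ => Finset.sum_congr rfl fun j _ => by ring
  rw [hswap]
  have hterm : ∀ i : Fin k, 0 ≤ lam i * (∑ j, (p j : ℝ) * N i j) := by
    intro i
    by_cases hNi : N i = 0
    · simp [hNi]
    · exact mul_nonneg (hlam i) (le_of_lt (hgenpos i hNi))
  rcases eq_or_lt_of_le (Finset.sum_nonneg fun i _ => hterm i) with heq | hlt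
  · exfalso
    apply hxne
    have hz := (Finset.sum_eq_zero_iff_of_nonneg fun i _ => hterm i).mp heq.symm
    have : ∀ i : Fin k, lam i • N i = 0 := by
      intro i
      by_cases hNi : N i = 0
      · simp [hNi]
      · have := hz i (Finset.mem_univ i)
        rcases mul_eq_zero.mp this with h | h
        · rw [h, zero_smul]
        · exact absurd h (ne_of_gt (hgenpos i hNi))
    rw [Finset.sum_eq_zero fun i _ => this i]
  · exact hlt

/-- **Existence and uniqueness of the Hilbert basis.**  Let `σ` be a strongly convex
rational polyhedral cone in `ℝ^r` (w.r.t. the lattice `ℤ^r`).  The set `H` of nonzero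
lattice points of `σ` which cannot be written as the sum of two nonzero lattice points
of `σ` generates the monoid `σ ∩ ℤ^r`, and it is contained in every generating set of
this monoid; hence it is the unique minimal generating system (the Hilbert basis). -/
theorem hilbert_basis_of_pointed_cone (r k : ℕ) (n : Fin k → (Fin r → ℚ))
    (σ : Set (Fin r → ℝ))
    (hσ : σ = posHull (fun i j => ((n i j : ℝ))))
    (hpointed : σ ∩ (-σ) = {0})
    (H : Set (Fin r → ℤ))
    (hH : H = {v : Fin r → ℤ | (fun i => ((v i : ℝ))) ∈ σ ∧ v ≠ 0 ∧
      ¬ ∃ a b : Fin r → ℤ, a ≠ 0 ∧ b ≠ 0 ∧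
        (fun i => ((a i : ℝ))) ∈ σ ∧ (fun i => ((b i : ℝ))) ∈ σ ∧ v = a + b}) :
    (∀ v : Fin r → ℤ, (fun i => ((v i : ℝ))) ∈ σ → v ∈ AddSubmonoid.closure H) ∧
    (∀ S : Set (Fin r → ℤ),
      (∀ s ∈ S, (fun i => ((s i : ℝ))) ∈ σ) →
      (∀ v : Fin r → ℤ, (fun i => ((v i : ℝ))) ∈ σ → v ∈ AddSubmonoid.closure S) →
      H ⊆ S) := by
  have hcast0 : ∀ v : Fin r → ℤ, (fun i => ((v i : ℝ))) = 0 ↔ v = 0 := by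
    intro v
    constructor
    · intro h
      funext i
      have := congrFun h i
      simp only [Pi.zero_apply] at this ⊢
      exact_mod_cast this
    · rintro rfl
      funext i
      simp
  have hzσ : (fun i => (((0 : Fin r → ℤ) i : ℝ))) ∈ σ := by
    have : (fun i => (((0 : Fin r → ℤ) i : ℝ))) = (0 : Fin r → ℝ) := by funext i; simp
    rw [this, hσ]; exact posHull_zero _
  have haddσ : ∀ a b : Fin r → ℤ, (fun i => ((a i : ℝ))) ∈ σ → (fun i => ((b i : ℝ))) ∈ σ →
      (fun i => (((a + b) i : ℝ))) ∈ σ := by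
    intro a b ha hb
    have : (fun i => (((a + b) i : ℝ))) = (fun i => ((a i : ℝ))) + (fun i => ((b i : ℝ))) := by
      funext i; simp only [Pi.add_apply]; push_cast; ring
    rw [this, hσ]
    exact posHull_add (hσ ▸ ha) (hσ ▸ hb)
  constructor
  · -- existence: H generates
    obtain ⟨p, hp⟩ := exists_int_functional (fun i j => ((n i j : ℝ))) σ hσ hpointed
    have hMpos : ∀ v : Fin r → ℤ, (fun i => ((v i : ℝ))) ∈ σ → v ≠ 0 → 1 ≤ ∑ j, p j * v j := by
      intro v hv hvne
      have h1 : (0:ℝ) < ∑ j, (p j : ℝ) * ((v j : ℝ)) :=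
        hp _ hv (fun h => hvne ((hcast0 v).mp h))
      have h2 : (0:ℝ) < ((∑ j, p j * v j : ℤ) : ℝ) := by push_cast; exact h1
      have h3 : (0:ℤ) < ∑ j, p j * v j := by exact_mod_cast h2
      omega
    have main : ∀ m : ℕ, ∀ v : Fin r → ℤ, (fun i => ((v i : ℝ))) ∈ σ →
        (∑ j, p j * v j).toNat ≤ m → v ∈ AddSubmonoid.closure H := by
      intro m
      induction m with
      | zero =>
        intro v hv hle
        by_cases hvz : v = 0
        · subst hvz; exact AddSubmonoid.zero_mem _
        · exfalso
          have := hMpos v hv hvz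
          omega
      | succ m ih =>
        intro v hv hle
        by_cases hvz : v = 0
        · subst hvz; exact AddSubmonoid.zero_mem _
        by_cases hvH : v ∈ H
        · exact AddSubmonoid.subset_closure hvH
        have hdec : ∃ a b : Fin r → ℤ, a ≠ 0 ∧ b ≠ 0 ∧
            (fun i => ((a i : ℝ))) ∈ σ ∧ (fun i => ((b i : ℝ))) ∈ σ ∧ v = a + b := by
          rw [hH] at hvH
          simp only [Set.mem_setOf_eq] at hvH
          by_contra hc
          exact hvH ⟨hv, hvz, hc⟩
        obtain ⟨a, b, ha0, hb0, haσ, hbσ, rfl⟩ := hdec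
        have hsum : ∑ j, p j * (a + b) j = (∑ j, p j * a j) + (∑ j, p j * b j) := by
          rw [← Finset.sum_add_distrib]
          exact Finset.sum_congr rfl fun j _ => by simp [Pi.add_apply]; ring
        have hMa := hMpos a haσ ha0
        have hMb := hMpos b hbσ hb0
        rw [hsum] at hle
        exact AddSubmonoid.add_mem _ (ih a haσ (by omega)) (ih b hbσ (by omega))
    intro v hv
    exact main _ v hv le_rfl
  · -- minimality
    intro S hSσ hSgen x hxH
    rw [hH] at hxH
    obtain ⟨hxσ, hx0, hxirr⟩ := hxH
    have hcl := hSgen x hxσ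
    have key : ∀ v ∈ AddSubmonoid.closure S, (fun i => ((v i : ℝ))) ∈ σ ∧
        (v = 0 ∨ v ∈ S ∨ ∃ a b : Fin r → ℤ, a ≠ 0 ∧ b ≠ 0 ∧
          (fun i => ((a i : ℝ))) ∈ σ ∧ (fun i => ((b i : ℝ))) ∈ σ ∧ v = a + b) := by
      intro v hv
      induction hv using AddSubmonoid.closure_induction with
      | mem y hy => exact ⟨hSσ y hy, Or.inr (Or.inl hy)⟩
      | zero => exact ⟨hzσ, Or.inl rfl⟩
      | add y z hy hz ihy ihz =>
        refine ⟨haddσ y z ihy.1 ihz.1, ?_⟩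
        by_cases hy0 : y = 0
        · subst hy0; rw [zero_add]; exact ihz.2
        by_cases hz0 : z = 0
        · subst hz0; rw [add_zero]; exact ihy.2
        exact Or.inr (Or.inr ⟨y, z, hy0, hz0, ihy.1, ihz.1, rfl⟩)
    rcases (key x hcl).2 with h | h | h
    · exact absurd h hx0
    · exact h
    · exact absurd h hxirr
end

section
/- Let σ ⊆ N_ℝ be a full-dimensional strongly convex rational polyhedral cone, and suppose there is m_σ ∈ M with ⟨m_σ, n⟩ = 1 for all n ∈ Gen(σ). Then for every nonzero n ∈ σ ∩ N one has ⟨m_σ, n⟩ ≥ 1, i.e., there are no nonzero lattice points of σ strictly below the hyperplane {⟨m_σ,·⟩ = 1}. -/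
/-- **Gorenstein toric singularities are canonical of index 1.**  Let `σ ⊆ ℝ^r` be a
full-dimensional strongly convex rational polyhedral cone with primitive ray generators
`g i`, and suppose `m_σ ∈ M = ℤ^r` satisfies `⟨m_σ, g i⟩ = 1` for all `i`.  Then every
nonzero lattice point `n ∈ σ ∩ ℤ^r` satisfies `⟨m_σ, n⟩ ≥ 1`; i.e. there are no nonzero
lattice points of `σ` strictly below the hyperplane `⟨m_σ, ·⟩ = 1`. -/
theorem gorenstein_is_canonical (r k : ℕ) (g : Fin k → (Fin r → ℤ))
    (σ : Set (Fin r → ℝ))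
    (hσ : σ = posHull (fun i j => ((g i j : ℝ))))
    (hpointed : σ ∩ (-σ) = {0})
    (hfull : Submodule.span ℝ σ = ⊤)
    (m : Fin r → ℤ) (hm : ∀ i, ∑ j, m j * g i j = 1) :
    ∀ n : Fin r → ℤ, (fun j => ((n j : ℝ))) ∈ σ → n ≠ 0 → 1 ≤ ∑ j, m j * n j := by
  intro n hn hn0
  subst hσ
  obtain ⟨lam, hlam, heq⟩ := hn
  have hcomp : ∀ j, (n j : ℝ) = ∑ i, lam i * (g i j : ℝ) := by
    intro j
    have := congrFun heq j
    simpa [Finset.sum_apply] using this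
  have hkey : ((∑ j, m j * n j : ℤ) : ℝ) = ∑ i, lam i := by
    push_cast
    calc ∑ j, (m j : ℝ) * (n j : ℝ)
        = ∑ j, (m j : ℝ) * ∑ i, lam i * (g i j : ℝ) := by
          refine Finset.sum_congr rfl fun j _ => by rw [hcomp j]
      _ = ∑ j, ∑ i, lam i * ((m j : ℝ) * (g i j : ℝ)) := by
          refine Finset.sum_congr rfl fun j _ => ?_
          rw [Finset.mul_sum]; exact Finset.sum_congr rfl fun i _ => by ring
      _ = ∑ i, lam i * ∑ j, (m j : ℝ) * (g i j : ℝ) := by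
          rw [Finset.sum_comm]
          refine Finset.sum_congr rfl fun i _ => by rw [Finset.mul_sum]
      _ = ∑ i, lam i := by
          refine Finset.sum_congr rfl fun i _ => ?_
          have : ((∑ j, m j * g i j : ℤ) : ℝ) = ∑ j, (m j : ℝ) * (g i j : ℝ) := by
            push_cast; rfl
          rw [← this, hm i, Int.cast_one, mul_one]
  have hnonneg : (0 : ℝ) ≤ ∑ i, lam i := Finset.sum_nonneg fun i _ => hlam i
  have hne : (∑ j, m j * n j : ℤ) ≠ 0 := by
    intro h0
    have hsum0 : ∑ i, lam i = 0 := by rw [← hkey, h0, Int.cast_zero]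
    have hall : ∀ i ∈ Finset.univ, lam i = 0 :=
      (Finset.sum_eq_zero_iff_of_nonneg fun i _ => hlam i).mp hsum0
    apply hn0
    funext j
    have : (n j : ℝ) = 0 := by
      rw [hcomp j]
      refine Finset.sum_eq_zero fun i _ => by rw [hall i (Finset.mem_univ i), zero_mul]
    exact_mod_cast this
  have hge : (0 : ℤ) ≤ ∑ j, m j * n j := by
    have : (0 : ℝ) ≤ ((∑ j, m j * n j : ℤ) : ℝ) := hkey ▸ hnonneg
    exact_mod_cast this
  omega
end
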